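/- arXiv:2012.01083 — 6 statements merged into one kernel-verified Lean document; each statement's English description precedes it below -/
import Mathlib

section
/- Let f : [0,∞) → ℝ be a bounded, nonnegative, twice-differentiable function satisfying f''(r) ≥ m²·f(r) for all r ≥ 0, where m > 0. Then f'(r) ≤ 0 for all r ≥ 0, and there exists a constant C > 0 such that f(r) ≤ C·e^{-m·r} for all r ≥ 0. -/
/-!
Since `f'' ≥ m² f ≥ 0`, `f'` is nondecreasing, so a positive value of `f'` would make the
bounded function `f` grow at least linearly; hence `f' ≤ 0`. The function `h = f' + m f` satisfies
`h' - m h = f'' - m² f ≥ 0`, so by Grönwall a positive value of `h` would grow like `e^{m r}`,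
while `h ≤ m sup f`; hence `f' ≤ -m f`, and Grönwall once more gives `f(r) ≤ f(0) e^{-m r}`.
-/

open Set Real

theorem le_mul_exp_of_deriv_le_mul {f : ℝ → ℝ} {K a : ℝ}
    (hf : ∀ x ≥ a, DifferentiableAt ℝ f x) (hK : ∀ x ≥ a, deriv f x ≤ K * f x)
    {x : ℝ} (hx : a ≤ x) : f x ≤ f a * exp (K * (x - a)) := by
  have hgronwall := le_gronwallBound_of_liminf_deriv_right_le (f' := deriv f) (ε := 0) (b := x)
    (fun y hy => (hf y hy.1).continuousAt.continuousWithinAt)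
    (fun y hy _ hr => (hf y hy.1).hasDerivAt.hasDerivWithinAt.liminf_right_slope_le hr)
    le_rfl (fun y hy => by simpa using hK y hy.1) x ⟨hx, le_rfl⟩
  rwa [gronwallBound_ε0] at hgronwall

theorem deriv_nonpos_of_monotoneOn_deriv_of_le {f : ℝ → ℝ} {a M : ℝ}
    (hf : ∀ x ≥ a, DifferentiableAt ℝ f x) (hmono : MonotoneOn (deriv f) (Ici a))
    (hM : ∀ x ≥ a, f x ≤ M) {x : ℝ} (hx : a ≤ x) : deriv f x ≤ 0 := by
  by_contra! hpos
  have htangent : ∀ y ≥ x, deriv f x * (y - x) ≤ f y - f x := by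
    intro y hy
    refine (convex_Ici x).mul_sub_le_image_sub_of_le_deriv
      (fun z hz => (hf z (hx.trans hz)).continuousAt.continuousWithinAt)
      (fun z hz => (hf z (hx.trans (interior_subset hz))).differentiableWithinAt)
      (fun z hz => hmono hx (hx.trans (interior_subset hz)) (interior_subset hz))
      x self_mem_Ici y hy hy
  set y := x + (M - f x + 1) / deriv f x
  have hxy : x ≤ y := le_add_of_nonneg_right (div_nonneg (by linarith [hM x hx]) hpos.le)
  have hslope : deriv f x * (y - x) = M - f x + 1 := by
    simp only [y, add_sub_cancel_left]
    field_simp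
  linarith [htangent y hxy, hM y (hx.trans hxy)]

theorem nonpos_of_mul_le_deriv_of_le {h : ℝ → ℝ} {m a M : ℝ} (hm : 0 < m)
    (hh : ∀ x ≥ a, DifferentiableAt ℝ h x) (hineq : ∀ x ≥ a, m * h x ≤ deriv h x)
    (hM : ∀ x ≥ a, h x ≤ M) {x : ℝ} (hx : a ≤ x) : h x ≤ 0 := by
  by_contra! hpos
  have hgrowth : ∀ y ≥ x, h x * exp (m * (y - x)) ≤ h y := by
    intro y hy
    have := le_mul_exp_of_deriv_le_mul (f := fun z => -h z) (K := m)
      (fun z hz => (hh z (hx.trans hz)).neg)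
      (fun z hz => by simpa [deriv.neg] using hineq z (hx.trans hz)) hy
    simpa only [neg_mul, neg_le_neg_iff] using this
  set y := x + M / (m * h x)
  have hM0 : 0 < M := hpos.trans_le (hM x hx)
  have hxy : x ≤ y := le_add_of_nonneg_right (by positivity)
  have hlinear : h x * (m * (y - x)) = M := by
    simp only [y, add_sub_cancel_left]
    field_simp
  have hexp := add_one_le_exp (m * (y - x))
  nlinarith [hgrowth y hxy, hM y (hx.trans hxy)]

/-- A bounded nonnegative twice-differentiable function on `[0,∞)` with
`f'' ≥ m² f` (m > 0) has nonpositive derivative and decays exponentially. -/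
theorem stmt_0 (f : ℝ → ℝ) (m : ℝ) (hm : 0 < m)
    (hf1 : ∀ r ≥ (0:ℝ), DifferentiableAt ℝ f r)
    (hf2 : ∀ r ≥ (0:ℝ), DifferentiableAt ℝ (deriv f) r)
    (hbdd : ∃ M : ℝ, ∀ r ≥ (0:ℝ), f r ≤ M)
    (hnn : ∀ r ≥ (0:ℝ), 0 ≤ f r)
    (hineq : ∀ r ≥ (0:ℝ), m ^ 2 * f r ≤ deriv (deriv f) r) :
    (∀ r ≥ (0:ℝ), deriv f r ≤ 0) ∧
    ∃ C > (0:ℝ), ∀ r ≥ (0:ℝ), f r ≤ C * Real.exp (-m * r) := by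
  obtain ⟨M, hM⟩ := hbdd
  have hmono : MonotoneOn (deriv f) (Ici 0) := by
    refine monotoneOn_of_deriv_nonneg (convex_Ici 0)
      (fun x hx => (hf2 x hx).continuousAt.continuousWithinAt)
      (fun x hx => (hf2 x (interior_subset hx)).differentiableWithinAt) fun x hx => ?_
    have hx : 0 ≤ x := interior_subset hx
    nlinarith [hineq x hx, hnn x hx]
  have hderiv : ∀ r ≥ (0:ℝ), deriv f r ≤ 0 := fun r hr =>
    deriv_nonpos_of_monotoneOn_deriv_of_le hf1 hmono hM hr
  have hsum_diff : ∀ x ≥ (0:ℝ), DifferentiableAt ℝ (fun x => deriv f x + m * f x) x :=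
    fun x hx => (hf2 x hx).add ((hf1 x hx).const_mul m)
  have hsum_growth : ∀ x ≥ (0:ℝ),
      m * (deriv f x + m * f x) ≤ deriv (fun x => deriv f x + m * f x) x := by
    intro x hx
    rw [deriv_fun_add (hf2 x hx) ((hf1 x hx).const_mul m), deriv_const_mul m (hf1 x hx)]
    nlinarith [hineq x hx]
  have hsum_le : ∀ x ≥ (0:ℝ), deriv f x + m * f x ≤ m * M := fun x hx => by
    nlinarith [hderiv x hx, hM x hx]
  have hsum : ∀ r ≥ (0:ℝ), deriv f r ≤ -m * f r := fun r hr => by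
    linarith [nonpos_of_mul_le_deriv_of_le hm hsum_diff hsum_growth hsum_le hr]
  refine ⟨hderiv, f 0 + 1, by linarith [hnn 0 le_rfl], fun r hr => ?_⟩
  have hdecay := le_mul_exp_of_deriv_le_mul hf1 hsum hr
  rw [sub_zero] at hdecay
  nlinarith [exp_pos (-m * r)]
end

section
/- Let f : [0,∞) → ℝ be differentiable with f(r) ≥ 0 and bounded, and suppose g(r) := f'(r) + m·f(r) satisfies g'(r) ≥ m·g(r) for all r ≥ 0 (m > 0). If g(a) > 0 for some a ≥ 0, then g(r) ≥ g(a)·e^{m(r-a)} for all r ≥ a; hence if f is bounded then g(r) ≤ 0 for all r ≥ 0. -/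
/-!
Since `(g e^{-ms})' = (g' - m g) e^{-ms} ≥ 0`, the function `g e^{-ms}` is nondecreasing, which is
the exponential lower bound. If `g(a) > 0` this makes `g → ∞`; as `f' = g - m f ≥ g - m M` for a
bound `M` of `f`, also `f' → ∞` and hence `f → ∞`, which contradicts the boundedness of `f`.
-/

open Real Set Filter

lemma monotoneOn_Ici_of_deriv_nonneg {u : ℝ → ℝ} {a : ℝ}
    (hu : ∀ r ≥ a, DifferentiableAt ℝ u r) (hu' : ∀ r > a, 0 ≤ deriv u r) :
    MonotoneOn u (Ici a) := by
  refine monotoneOn_of_deriv_nonneg (convex_Ici a)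
    (fun x hx => (hu x hx).continuousAt.continuousWithinAt) ?_ ?_ <;> rw [interior_Ici]
  · exact fun x hx => (hu x hx.le).differentiableWithinAt
  · exact hu'

lemma mul_exp_le_of_mul_le_deriv {u : ℝ → ℝ} {m a : ℝ}
    (hu : ∀ r ≥ a, DifferentiableAt ℝ u r) (hu' : ∀ r ≥ a, m * u r ≤ deriv u r)
    {r : ℝ} (hr : a ≤ r) : u a * exp (m * (r - a)) ≤ u r := by
  have hφ : ∀ s ≥ a, HasDerivAt (fun s => u s * exp (m * (a - s)))
      ((deriv u s - m * u s) * exp (m * (a - s))) s := by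
    intro s hs
    have hexp : HasDerivAt (fun s => exp (m * (a - s))) (exp (m * (a - s)) * (m * (0 - 1))) s :=
      (((hasDerivAt_const s a).sub (hasDerivAt_id s)).const_mul m).exp
    exact ((hu s hs).hasDerivAt.mul hexp).congr_deriv (by ring)
  have hmono : MonotoneOn (fun s => u s * exp (m * (a - s))) (Ici a) :=
    monotoneOn_Ici_of_deriv_nonneg (fun s hs => (hφ s hs).differentiableAt) fun s hs => by
      rw [(hφ s hs.le).deriv]
      exact mul_nonneg (sub_nonneg.2 (hu' s hs.le)) (exp_nonneg _)
  have h := hmono (mem_Ici.2 le_rfl) (mem_Ici.2 hr) hr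
  simp only [sub_self, mul_zero, exp_zero, mul_one] at h
  calc u a * exp (m * (r - a)) ≤ u r * exp (m * (a - r)) * exp (m * (r - a)) :=
        mul_le_mul_of_nonneg_right h (exp_nonneg _)
    _ = u r := by rw [mul_assoc, ← exp_add, ← mul_add, sub_add_sub_cancel', sub_self, mul_zero,
          exp_zero, mul_one]

lemma tendsto_atTop_of_mul_le_deriv {u : ℝ → ℝ} {m a : ℝ} (hm : 0 < m)
    (hu : ∀ r ≥ a, DifferentiableAt ℝ u r) (hu' : ∀ r ≥ a, m * u r ≤ deriv u r)
    (ha : 0 < u a) : Tendsto u atTop atTop := by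
  have hexp : Tendsto (fun r => u a * exp (m * (r - a))) atTop atTop :=
    (tendsto_exp_atTop.comp ((tendsto_atTop_add_const_right _ (-a) tendsto_id).const_mul_atTop
      hm)).const_mul_atTop ha
  exact tendsto_atTop_mono' _ (eventually_ge_atTop a |>.mono
    fun r hr => mul_exp_le_of_mul_le_deriv hu hu' hr) hexp

lemma tendsto_atTop_of_tendsto_deriv_atTop {f : ℝ → ℝ}
    (hf : ∀ᶠ r in atTop, DifferentiableAt ℝ f r) (hf' : Tendsto (deriv f) atTop atTop) :
    Tendsto f atTop atTop := by
  obtain ⟨b, hb⟩ := eventually_atTop.1 (hf.and (hf'.eventually_ge_atTop 1))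
  have hlin : ∀ r ≥ b, f b + (r - b) ≤ f r := by
    intro r hr
    have := (convex_Ici b).mul_sub_le_image_sub_of_le_deriv
      (fun x hx => (hb x hx).1.continuousAt.continuousWithinAt)
      (fun x hx => (hb x (interior_subset hx)).1.differentiableWithinAt)
      (fun x hx => (hb x (interior_subset hx)).2) b self_mem_Ici r hr hr
    linarith
  exact tendsto_atTop_mono' _ (eventually_ge_atTop b |>.mono hlin)
    (tendsto_atTop_add_const_left _ _ (tendsto_atTop_add_const_right _ _ tendsto_id))

theorem stmt_1_general (f : ℝ → ℝ) (m : ℝ) (hm : 0 < m)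
    (hf1 : ∀ r ≥ (0:ℝ), DifferentiableAt ℝ f r)
    (hf2 : ∀ r ≥ (0:ℝ), DifferentiableAt ℝ (deriv f) r)
    (hbdd : ∃ M : ℝ, ∀ r ≥ (0:ℝ), f r ≤ M)
    (g : ℝ → ℝ) (hg : ∀ r, g r = deriv f r + m * f r)
    (hgineq : ∀ r ≥ (0:ℝ), m * g r ≤ deriv g r) :
    (∀ a ≥ (0:ℝ), 0 < g a → ∀ r ≥ a, g a * Real.exp (m * (r - a)) ≤ g r) ∧
    (∀ r ≥ (0:ℝ), g r ≤ 0) := by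
  have hgdiff : ∀ r ≥ (0:ℝ), DifferentiableAt ℝ g r := fun r hr => by
    rw [show g = _ from funext hg]
    exact (hf2 r hr).add ((hf1 r hr).const_mul m)
  have hg_from (a : ℝ) (ha : 0 ≤ a) :
      (∀ r ≥ a, DifferentiableAt ℝ g r) ∧ ∀ r ≥ a, m * g r ≤ deriv g r :=
    ⟨fun r hr => hgdiff r (ha.trans hr), fun r hr => hgineq r (ha.trans hr)⟩
  refine ⟨fun a ha _ r hr => mul_exp_le_of_mul_le_deriv (hg_from a ha).1 (hg_from a ha).2 hr, ?_⟩
  intro a ha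
  by_contra! hga
  obtain ⟨M, hM⟩ := hbdd
  have hg_top : Tendsto g atTop atTop :=
    tendsto_atTop_of_mul_le_deriv hm (hg_from a ha).1 (hg_from a ha).2 hga
  have hf'_top : Tendsto (deriv f) atTop atTop := by
    refine tendsto_atTop_mono' _ ?_ (tendsto_atTop_add_const_right _ (-(m * M)) hg_top)
    filter_upwards [eventually_ge_atTop 0] with s hs
    nlinarith [hM s hs, hg s]
  have hf_top : Tendsto f atTop atTop :=
    tendsto_atTop_of_tendsto_deriv_atTop (eventually_ge_atTop 0 |>.mono hf1) hf'_top
  obtain ⟨s, hMs, hs⟩ := (hf_top.eventually_gt_atTop M).and (eventually_ge_atTop 0) |>.exists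
  exact (hM s hs).not_gt hMs

/-- Comparison step: with `g = f' + m f`, if `g' ≥ m g` on `[0,∞)` and `f` is
bounded and nonnegative, then `g(a) > 0` would force exponential growth
`g(r) ≥ g(a) e^{m(r-a)}`; consequently `g ≤ 0` on `[0,∞)`. -/
theorem stmt_1 (f : ℝ → ℝ) (m : ℝ) (hm : 0 < m)
    (hf1 : ∀ r ≥ (0:ℝ), DifferentiableAt ℝ f r)
    (hf2 : ∀ r ≥ (0:ℝ), DifferentiableAt ℝ (deriv f) r)
    (hnn : ∀ r ≥ (0:ℝ), 0 ≤ f r)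
    (hbdd : ∃ M : ℝ, ∀ r ≥ (0:ℝ), f r ≤ M)
    (g : ℝ → ℝ) (hg : ∀ r, g r = deriv f r + m * f r)
    (hgineq : ∀ r ≥ (0:ℝ), m * g r ≤ deriv g r) :
    (∀ a ≥ (0:ℝ), 0 < g a → ∀ r ≥ a, g a * Real.exp (m * (r - a)) ≤ g r) ∧
    (∀ r ≥ (0:ℝ), g r ≤ 0) :=
  stmt_1_general f m hm hf1 hf2 hbdd g hg hgineq
end

section
/- Let k ≥ 2, ρ = −diag(e^{−πi/k}, …, e^{−(k−1)πi/k}) ∈ M_{k−1}(ℂ), and Γᵢ = ρⁱ·(1,…,1)ᵀ for i ∈ ℤ. Then the 2k−2 vectors Γ₀, Γ₁, …, Γ_{2k−3} are linearly independent over ℝ. -/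
open Polynomial Complex

set_option maxHeartbeats 1000000 in
/-- The vectors `Γ₀,…,Γ_{2k-3}`, where `Γᵢ = ρⁱ(1,…,1)ᵀ` and
`ρ = -diag(e^{-πi/k},…,e^{-(k-1)πi/k})`, are linearly independent over `ℝ`. -/
theorem stmt_6 (k : ℕ) (hk : 2 ≤ k)
    (ρ : Matrix (Fin (k-1)) (Fin (k-1)) ℂ)
    (hρ : ρ = Matrix.diagonal (fun j : Fin (k-1) =>
      -Complex.exp (-(Real.pi : ℂ) * Complex.I * (((j : ℕ) : ℂ) + 1) / (k : ℂ))))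
    (Γ : ℕ → Fin (k-1) → ℂ)
    (hΓ : ∀ i, Γ i = (ρ ^ i).mulVec (fun _ => 1)) :
    LinearIndependent ℝ (fun i : Fin (2 * k - 2) => Γ (i : ℕ)) := by
  have hk0 : (0:ℝ) < k := by positivity
  have hkC : (k:ℂ) ≠ 0 := by exact_mod_cast hk0.ne'
  -- angles
  set μ : Fin (k-1) → ℝ := fun j => Real.pi * (1 - ((j:ℕ)+1)/k) with hμ
  have hμmem : ∀ j, μ j ∈ Set.Ioo 0 Real.pi := by
    intro j
    have hjn : (j:ℕ) < k - 1 := j.is_lt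
    have hj : ((j:ℕ):ℝ) + 1 < k := by
      have : (j:ℕ) + 1 < k := by omega
      exact_mod_cast this
    have hpi := Real.pi_pos
    constructor
    · have : ((j:ℕ)+1)/(k:ℝ) < 1 := by rw [div_lt_one hk0]; linarith
      simp only [hμ]; nlinarith
    · have h0 : (0:ℝ) < (((j:ℕ):ℝ)+1)/k := by positivity
      simp only [hμ]; nlinarith
  -- μ injective
  have hμinj : Function.Injective μ := by
    intro a b hab
    simp only [hμ] at hab
    have h2 : (1 - (((a:ℕ):ℝ)+1)/k) = (1 - (((b:ℕ):ℝ)+1)/k) :=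
      mul_left_cancel₀ Real.pi_ne_zero hab
    have h5 : ((((a:ℕ):ℝ))+1)/k = ((((b:ℕ):ℝ))+1)/k := by linarith
    rw [div_eq_div_iff hk0.ne' hk0.ne'] at h5
    have h6 := mul_right_cancel₀ hk0.ne' h5
    have h3 : ((a:ℕ):ℝ) = ((b:ℕ):ℝ) := by linarith
    have : (a:ℕ) = (b:ℕ) := by exact_mod_cast h3
    exact Fin.ext this
  -- λ values
  set lam : Fin (k-1) → ℂ := fun j => Complex.exp ((μ j : ℝ) * Complex.I) with hlam
  have hlam_eq : ∀ j, lam j = -Complex.exp (-(Real.pi : ℂ) * Complex.I * (((j : ℕ) : ℂ) + 1) / (k : ℂ)) := by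
    intro j
    have harg : ((μ j : ℝ) : ℂ) * Complex.I
        = (Real.pi : ℂ) * Complex.I + (-(Real.pi : ℂ) * Complex.I * (((j : ℕ) : ℂ) + 1) / (k : ℂ)) := by
      simp only [hμ]
      push_cast
      field_simp
      ring
    rw [hlam]
    simp only
    rw [harg, Complex.exp_add, Complex.exp_pi_mul_I]
    ring
  -- Γ formula
  have hΓval : ∀ i j, Γ i j = lam j ^ i := by
    intro i j
    rw [hΓ, hρ]
    have hfun : (fun j : Fin (k-1) =>
        -Complex.exp (-(Real.pi : ℂ) * Complex.I * (((j : ℕ) : ℂ) + 1) / (k : ℂ))) = lam := by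
      funext j'; exact (hlam_eq j').symm
    rw [hfun, Matrix.diagonal_pow, Matrix.mulVec_diagonal, Pi.pow_apply, mul_one]
  -- main argument
  rw [Fintype.linearIndependent_iff]
  intro g hg i
  set p : Polynomial ℂ := ∑ i' : Fin (2*k-2), Polynomial.C ((g i' : ℝ) : ℂ) * Polynomial.X ^ (i' : ℕ) with hp
  have heval : ∀ j, p.eval (lam j) = 0 := by
    intro j
    have hgj := congrFun hg j
    simp only [Finset.sum_apply, Pi.smul_apply, Pi.zero_apply] at hgj
    rw [hp]
    simp only [Polynomial.eval_finset_sum, Polynomial.eval_mul, Polynomial.eval_C,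
      Polynomial.eval_pow, Polynomial.eval_X]
    rw [← hgj]
    congr 1
    ext i'
    rw [hΓval, Complex.real_smul]
  have hevalc : ∀ j, p.eval ((starRingEnd ℂ) (lam j)) = 0 := by
    intro j
    have h := heval j
    have h2 : (starRingEnd ℂ) (p.eval (lam j)) = 0 := by rw [h]; simp
    rw [hp] at h2 ⊢
    simp only [Polynomial.eval_finset_sum, Polynomial.eval_mul, Polynomial.eval_C,
      Polynomial.eval_pow, Polynomial.eval_X, map_sum, map_mul, map_pow,
      Complex.conj_ofReal] at h2 ⊢
    exact h2
  set f : (Fin (k-1) ⊕ Fin (k-1)) → ℂ := Sum.elim lam (fun j => (starRingEnd ℂ) (lam j)) with hf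
  have hexp_inj : ∀ x y : ℝ, Complex.exp ((x:ℂ)*Complex.I) = Complex.exp ((y:ℂ)*Complex.I) →
      ∃ n : ℤ, x = y + n * (2 * Real.pi) := by
    intro x y h
    rw [Complex.exp_eq_exp_iff_exists_int] at h
    obtain ⟨n, hn⟩ := h
    refine ⟨n, ?_⟩
    have h1 : (x:ℂ) * Complex.I = ((y + n * (2 * Real.pi) : ℝ) : ℂ) * Complex.I := by
      rw [hn]; push_cast; ring
    have h2 := mul_right_cancel₀ Complex.I_ne_zero h1
    exact_mod_cast h2
  have hconj : ∀ j, (starRingEnd ℂ) (lam j) = Complex.exp (((-μ j : ℝ):ℂ) * Complex.I) := by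
    intro j
    rw [hlam]
    simp only
    rw [← Complex.exp_conj, map_mul, Complex.conj_ofReal, Complex.conj_I]
    push_cast
    ring_nf
  have hfinj : Function.Injective f := by
    intro a b hab
    have hpi := Real.pi_pos
    match a, b with
    | Sum.inl a, Sum.inl b =>
      simp only [hf, Sum.elim_inl, hlam] at hab
      obtain ⟨n, hn⟩ := hexp_inj _ _ hab
      obtain ⟨ha1, ha2⟩ := hμmem a; obtain ⟨hb1, hb2⟩ := hμmem b
      have hn0 : n = 0 := by
        rcases lt_trichotomy n 0 with h|h|h
        · have hn1 : n ≤ -1 := by omega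
          have : (n:ℝ) ≤ -1 := by exact_mod_cast hn1
          nlinarith
        · exact h
        · have hn1 : 1 ≤ n := by omega
          have : (1:ℝ) ≤ n := by exact_mod_cast hn1
          nlinarith
      rw [hn0] at hn
      simp at hn
      exact congrArg Sum.inl (hμinj hn)
    | Sum.inl a, Sum.inr b =>
      simp only [hf, Sum.elim_inl, Sum.elim_inr] at hab
      rw [hconj b, hlam] at hab
      obtain ⟨n, hn⟩ := hexp_inj _ _ hab
      obtain ⟨ha1, ha2⟩ := hμmem a; obtain ⟨hb1, hb2⟩ := hμmem b
      exfalso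
      have h1 : μ a + μ b = n * (2 * Real.pi) := by linarith
      rcases le_or_gt n 0 with h2 | h2
      · have : (n:ℝ) ≤ 0 := by exact_mod_cast h2
        nlinarith
      · have hn1 : 1 ≤ n := by omega
        have : (1:ℝ) ≤ n := by exact_mod_cast hn1
        nlinarith
    | Sum.inr a, Sum.inl b =>
      simp only [hf, Sum.elim_inl, Sum.elim_inr] at hab
      rw [hconj a, hlam] at hab
      obtain ⟨n, hn⟩ := hexp_inj _ _ hab
      obtain ⟨ha1, ha2⟩ := hμmem a; obtain ⟨hb1, hb2⟩ := hμmem b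
      exfalso
      have h1 : μ a + μ b = -(n * (2 * Real.pi)) := by linarith
      rcases le_or_gt 0 n with h2 | h2
      · have : (0:ℝ) ≤ n := by exact_mod_cast h2
        nlinarith
      · have hn1 : n ≤ -1 := by omega
        have : (n:ℝ) ≤ -1 := by exact_mod_cast hn1
        nlinarith
    | Sum.inr a, Sum.inr b =>
      simp only [hf, Sum.elim_inr] at hab
      rw [hconj a, hconj b] at hab
      obtain ⟨n, hn⟩ := hexp_inj _ _ hab
      obtain ⟨ha1, ha2⟩ := hμmem a; obtain ⟨hb1, hb2⟩ := hμmem b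
      have hn0 : n = 0 := by
        rcases lt_trichotomy n 0 with h|h|h
        · have hn1 : n ≤ -1 := by omega
          have : (n:ℝ) ≤ -1 := by exact_mod_cast hn1
          nlinarith
        · exact h
        · have hn1 : 1 ≤ n := by omega
          have : (1:ℝ) ≤ n := by exact_mod_cast hn1
          nlinarith
      rw [hn0] at hn
      simp at hn
      have : μ a = μ b := by linarith
      exact congrArg Sum.inr (hμinj this)
  have hdeg : p.natDegree < Fintype.card (Fin (k-1) ⊕ Fin (k-1)) := by
    have hcard : Fintype.card (Fin (k-1) ⊕ Fin (k-1)) = 2*k-2 := by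
      simp [Fintype.card_sum]; omega
    rw [hcard]
    have hle : p.natDegree ≤ 2*k-3 := by
      rw [hp]
      apply Polynomial.natDegree_sum_le_of_forall_le
      intro i' _
      apply le_trans (Polynomial.natDegree_C_mul_le _ _)
      rw [Polynomial.natDegree_X_pow]
      have := i'.is_lt
      omega
    omega
  have hpz : p = 0 := by
    apply Polynomial.eq_zero_of_natDegree_lt_card_of_eval_eq_zero p hfinj _ hdeg
    rintro (j | j)
    · exact heval j
    · exact hevalc j
  have hcoeff : p.coeff (i : ℕ) = ((g i : ℝ) : ℂ) := by
    rw [hp, Polynomial.finset_sum_coeff, Finset.sum_eq_single i]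
    · simp
    · intro b _ hb
      simp only [Polynomial.coeff_C_mul, Polynomial.coeff_X_pow]
      rw [if_neg]
      · ring
      · intro h
        exact hb (Fin.ext h.symm)
    · intro h
      exact absurd (Finset.mem_univ i) h
  rw [hpz] at hcoeff
  simp only [Polynomial.coeff_zero] at hcoeff
  exact_mod_cast hcoeff.symm
end

section
/- Let k ≥ 2, ρ the diagonal matrix −diag(e^{−πi/k},…,e^{−(k−1)πi/k}), Γᵢ = ρⁱ(1,…,1)ᵀ, and Πᵢ = (1−ρ)Γᵢ. Let Π be the lattice (ℤ-span) generated by Π₀,…,Π_{2k−3} in ℂ^{k−1}, and Γ the lattice generated by Γ₀,…,Γ_{2k−3}. Then Π ⊆ Γ, the quotient group Γ/Π is cyclic generated by the class of Γ₀, and the order of Γ₀ in Γ/Π is exactly k; hence Γ/Π ≅ ℤ/kℤ. -/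
/-!
Since `ρ` is diagonal, `Γᵢ = λⁱ` and `Πᵢ = (1 - λ) λⁱ` in the ring `ℂ^{k-1}`, where `λ` is the
vector of eigenvalues. Writing `μ = e^{πi/k}`, the eigenvalues are `μ, …, μ^{k-1}`; together with
their complex conjugates they are exactly the roots of `S = 1 + X² + ⋯ + X^{2k-2}`, the `2k`-th
roots of unity other than `±1`. Hence evaluation at `λ` identifies `ℤ[X]/(S)` with `Γ` (its
basis `1, X, …, X^{2k-3}` going to `Γ₀, …, Γ_{2k-3}`) and the ideal `(1 - X)` with `Π`, so
`Γ/Π ≅ ℤ[X]/(S, 1 - X) ≅ ℤ/S(1) = ℤ/k`.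
-/

open Polynomial Finset

theorem Polynomial.Monic.dvd_of_forall_eval_eq_zero {R : Type*} [CommRing R] [IsDomain R]
    {p q : R[X]} (hq : q.Monic) (s : Finset R) (hcard : q.natDegree ≤ #s)
    (hqs : ∀ z ∈ s, q.eval z = 0) (hps : ∀ z ∈ s, p.eval z = 0) : q ∣ p := by
  rw [← modByMonic_eq_zero_iff_dvd hq]
  by_cases hq1 : q = 1
  · simp [hq1]
  refine eq_zero_of_natDegree_lt_card_of_eval_eq_zero' _ s (fun z hz => ?_)
    ((natDegree_modByMonic_lt p hq hq1).trans_le hcard)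
  simp [modByMonic_eq_sub_mul_div p q, hps z hz, hqs z hz]

section PowerLattice

variable {A : Type*} [CommRing A] (x : A)

theorem span_pow_le_range_aeval (N : ℕ) :
    Submodule.span ℤ (Set.range fun i : Fin N => x ^ (i : ℕ)) ≤
      LinearMap.range (aeval x).toLinearMap :=
  Submodule.span_le.mpr <| Set.range_subset_iff.mpr fun i => ⟨X ^ (i : ℕ), by simp⟩

theorem span_pow_eq_range_aeval {S : ℤ[X]} (hS : S.Monic) (hxS : aeval x S = 0) :
    Submodule.span ℤ (Set.range fun i : Fin S.natDegree => x ^ (i : ℕ)) =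
      LinearMap.range (aeval x).toLinearMap := by
  refine le_antisymm (span_pow_le_range_aeval x _) ?_
  rintro _ ⟨p, rfl⟩
  have hmod : aeval x p = aeval x (p %ₘ S) := by
    conv_lhs => rw [← modByMonic_add_div p S]
    simp [hxS]
  by_cases hS1 : S = 1
  · rw [AlgHom.toLinearMap_apply, hmod, hS1, modByMonic_one, map_zero]
    exact zero_mem _
  rw [AlgHom.toLinearMap_apply, hmod, aeval_eq_sum_range' (natDegree_modByMonic_lt p hS hS1),
    ← Fin.sum_univ_eq_sum_range (fun i => (p %ₘ S).coeff i • x ^ i)]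
  exact Submodule.sum_mem _ fun i _ => Submodule.smul_mem _ _ (Submodule.subset_span ⟨i, rfl⟩)

theorem span_sub_mul_pow_eq_map (N : ℕ) :
    Submodule.span ℤ (Set.range fun i : Fin N => (1 - x) * x ^ (i : ℕ)) =
      (Submodule.span ℤ (Set.range fun i : Fin N => x ^ (i : ℕ))).map
        (LinearMap.mulLeft ℤ (1 - x)) := by
  rw [Submodule.map_span, ← Set.range_comp]
  rfl

theorem span_sub_mul_pow_le_span_pow {S : ℤ[X]} (hS : S.Monic) (hxS : aeval x S = 0) :
    Submodule.span ℤ (Set.range fun i : Fin S.natDegree => (1 - x) * x ^ (i : ℕ)) ≤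
      Submodule.span ℤ (Set.range fun i : Fin S.natDegree => x ^ (i : ℕ)) := by
  rw [span_sub_mul_pow_eq_map, span_pow_eq_range_aeval x hS hxS]
  rintro _ ⟨_, ⟨p, rfl⟩, rfl⟩
  exact ⟨(1 - X) * p, by simp⟩

theorem span_pow_le_span_sub_mul_pow_sup (N : ℕ) :
    Submodule.span ℤ (Set.range fun i : Fin N => x ^ (i : ℕ)) ≤
      Submodule.span ℤ (Set.range fun i : Fin N => (1 - x) * x ^ (i : ℕ)) ⊔
        Submodule.span ℤ {1} := by
  rw [Submodule.span_le, Set.range_subset_iff]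
  intro i
  have htelescope : x ^ (i : ℕ) = -((1 - x) * ∑ m ∈ range i, x ^ m) + 1 := by
    rw [mul_neg_geom_sum]
    ring
  rw [SetLike.mem_coe, htelescope, mul_sum]
  refine Submodule.add_mem_sup (Submodule.neg_mem _ (Submodule.sum_mem _ fun m hm => ?_))
    (Submodule.mem_span_singleton_self 1)
  exact Submodule.subset_span ⟨⟨m, (mem_range.mp hm).trans i.2⟩, rfl⟩

theorem zsmul_one_mem_span_sub_mul_pow_iff {S : ℤ[X]} (hS : S.Monic)
    (hker : ∀ p : ℤ[X], aeval x p = 0 ↔ S ∣ p) (n : ℤ) :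
    n • (1 : A) ∈ Submodule.span ℤ (Set.range fun i : Fin S.natDegree => (1 - x) * x ^ (i : ℕ)) ↔
      S.eval 1 ∣ n := by
  have hxS : aeval x S = 0 := (hker S).mpr dvd_rfl
  rw [span_sub_mul_pow_eq_map, span_pow_eq_range_aeval x hS hxS]
  simp only [Submodule.mem_map, LinearMap.mem_range, LinearMap.mulLeft_apply]
  constructor
  · rintro ⟨_, ⟨p, rfl⟩, hp⟩
    obtain ⟨q, hq⟩ := (hker ((1 - X) * p - C n)).mp (by simpa [sub_eq_zero] using hp)
    have h1 := congrArg (eval 1) hq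
    simp only [eq_intCast, eval_sub, eval_mul, eval_one, eval_X, sub_self, zero_mul, eval_intCast,
      Int.cast_eq, zero_sub] at h1
    exact ⟨-q.eval 1, by linarith⟩
  · rintro ⟨m, rfl⟩
    -- `S - S(1) = (X - 1) r` and `S(x) = 0` give `S(1) = (1 - x) r(x)`.
    obtain ⟨r, hr⟩ := X_sub_C_dvd_sub_C_eval (a := (1 : ℤ)) (p := S)
    have hrx := congrArg (aeval x) hr
    simp only [eq_intCast, aeval_sub, hxS, map_intCast, zero_sub, map_mul, aeval_X, map_one]
      at hrx
    refine ⟨_, ⟨C m * r, rfl⟩, ?_⟩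
    simp only [eq_intCast, AlgHom.toLinearMap_apply, map_mul, map_intCast, zsmul_eq_mul,
      Int.cast_mul, mul_one]
    linear_combination (m : A) * hrx

end PowerLattice

noncomputable def evenGeomPoly (k : ℕ) : ℤ[X] := ∑ i ∈ range k, X ^ (2 * i)

theorem evenGeomPoly_succ (m : ℕ) : evenGeomPoly (m + 1) = X ^ (2 * m) + evenGeomPoly m := by
  rw [evenGeomPoly, sum_range_succ, add_comm, evenGeomPoly]

theorem degree_evenGeomPoly_lt (m : ℕ) : (evenGeomPoly m).degree < (2 * m : ℕ) := by
  refine (degree_sum_le _ _).trans_lt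
    ((Finset.sup_lt_iff (WithBot.bot_lt_coe _)).mpr fun i hi => ?_)
  rw [degree_X_pow]
  exact_mod_cast (by rw [mem_range] at hi; omega : 2 * i < 2 * m)

theorem evenGeomPoly_monic {k : ℕ} (hk : 0 < k) : (evenGeomPoly k).Monic := by
  obtain ⟨m, rfl⟩ := Nat.exists_eq_add_one_of_ne_zero hk.ne'
  rw [evenGeomPoly_succ]
  exact monic_X_pow_add (degree_evenGeomPoly_lt m)

theorem natDegree_evenGeomPoly {k : ℕ} (hk : 0 < k) :
    (evenGeomPoly k).natDegree = 2 * k - 2 := by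
  obtain ⟨m, rfl⟩ := Nat.exists_eq_add_one_of_ne_zero hk.ne'
  rw [evenGeomPoly_succ, natDegree_add_eq_left_of_degree_lt, natDegree_X_pow]
  · omega
  · rw [degree_X_pow]
    exact degree_evenGeomPoly_lt m

theorem eval_one_evenGeomPoly (k : ℕ) : (evenGeomPoly k).eval 1 = k := by
  simp [evenGeomPoly, eval_finsetSum]

theorem aeval_evenGeomPoly_eq_zero {K : Type*} [Field K] {ζ : K} {k : ℕ} (h2 : ζ ^ 2 ≠ 1)
    (h2k : ζ ^ (2 * k) = 1) : aeval ζ (evenGeomPoly k) = 0 := by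
  have hgeom : aeval ζ (evenGeomPoly k) = ∑ i ∈ range k, (ζ ^ 2) ^ i := by
    simp [evenGeomPoly, pow_mul]
  rw [hgeom, geom_sum_eq h2, ← pow_mul, h2k, sub_self, zero_div]

theorem IsPrimitiveRoot.aeval_evenGeomPoly_pow_eq_zero {K : Type*} [Field K] {μ : K} {k t : ℕ}
    (hμ : IsPrimitiveRoot μ (2 * k)) (ht0 : t ≠ 0) (htk : t ≠ k) (ht : t < 2 * k) :
    aeval (μ ^ t) (evenGeomPoly k) = 0 := by
  refine aeval_evenGeomPoly_eq_zero ?_ ?_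
  · rw [← pow_mul, Ne, hμ.pow_eq_one_iff_dvd]
    intro h
    exact htk (by have := Nat.eq_of_dvd_of_lt_two_mul (by omega) h (by omega); omega)
  · rw [← pow_mul, hμ.pow_eq_one_iff_dvd]
    exact dvd_mul_left _ _

theorem isPrimitiveRoot_exp_pi_mul_I_div {k : ℕ} (hk : 0 < k) :
    IsPrimitiveRoot (Complex.exp (Real.pi * Complex.I / k)) (2 * k) := by
  convert Complex.isPrimitiveRoot_exp (2 * k) (by omega) using 2
  push_cast
  field_simp

theorem Complex.pow_eq_conj_pow_sub {ζ : ℂ} {n t : ℕ} (hζ : ζ ^ n = 1) (hn : n ≠ 0)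
    (ht : t ≤ n) :
    ζ ^ t = starRingEnd ℂ (ζ ^ (n - t)) := by
  rw [← Complex.inv_eq_conj (by rw [norm_pow, Complex.norm_eq_one_of_pow_eq_one hζ hn, one_pow])]
  exact eq_inv_of_mul_eq_one_left (by rw [← pow_add, Nat.add_sub_cancel' ht, hζ])

theorem Polynomial.aeval_conj_int (z : ℂ) (p : ℤ[X]) :
    aeval (starRingEnd ℂ z) p = starRingEnd ℂ (aeval z p) :=
  aeval_algHom_apply (starRingEnd ℂ).toIntAlgHom z p

theorem evenGeomPoly_dvd_of_aeval_exp_pow_eq_zero {k : ℕ} (hk : 0 < k) {p : ℤ[X]}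
    (hp : ∀ t, 0 < t → t < k → aeval (Complex.exp (Real.pi * Complex.I / k) ^ t) p = 0) :
    evenGeomPoly k ∣ p := by
  set μ := Complex.exp (Real.pi * Complex.I / k)
  have hμ : IsPrimitiveRoot μ (2 * k) := isPrimitiveRoot_exp_pi_mul_I_div hk
  set T := ((range (2 * k)).erase 0).erase k
  have hT : ∀ t ∈ T, t ≠ 0 ∧ t ≠ k ∧ t < 2 * k := by
    intro t ht
    simp only [T, mem_erase, mem_range] at ht
    omega
  rw [← map_dvd_map (algebraMap ℤ ℂ) (RingHom.injective_int _) (evenGeomPoly_monic hk)]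
  refine (evenGeomPoly_monic hk).map _ |>.dvd_of_forall_eval_eq_zero (T.image (μ ^ ·)) ?_ ?_ ?_
  · rw [(evenGeomPoly_monic hk).natDegree_map, natDegree_evenGeomPoly hk,
      card_image_of_injOn fun a ha b hb => hμ.pow_inj (hT a ha).2.2 (hT b hb).2.2,
      card_erase_of_mem (by simp only [mem_erase, mem_range]; omega),
      card_erase_of_mem (by simp only [mem_range]; omega), card_range]
    omega
  · simp only [mem_image, eval_map_algebraMap]
    rintro _ ⟨t, ht, rfl⟩
    exact hμ.aeval_evenGeomPoly_pow_eq_zero (hT t ht).1 (hT t ht).2.1 (hT t ht).2.2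
  · simp only [mem_image, eval_map_algebraMap]
    rintro _ ⟨t, ht, rfl⟩
    obtain ⟨ht0, htk, ht2k⟩ := hT t ht
    rcases lt_or_gt_of_ne htk with htk | htk
    · exact hp t (by omega) htk
    · rw [Complex.pow_eq_conj_pow_sub hμ.pow_eq_one (by omega) ht2k.le, aeval_conj_int,
        hp _ (by omega) (by omega), map_zero]

noncomputable def cyclicEigenvalues (k : ℕ) : Fin (k - 1) → ℂ := fun j =>
  -Complex.exp (-(Real.pi : ℂ) * Complex.I * (((j : ℕ) : ℂ) + 1) / (k : ℂ))

theorem cyclicEigenvalues_eq_pow {k : ℕ} (hk : 0 < k) (j : Fin (k - 1)) :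
    cyclicEigenvalues k j = Complex.exp (Real.pi * Complex.I / k) ^ (k - 1 - (j : ℕ)) := by
  have hj := j.2
  have hk0 : (k : ℂ) ≠ 0 := by exact_mod_cast hk.ne'
  have hcast : (((k - 1 - (j : ℕ) : ℕ) : ℂ)) = k - 1 - (j : ℕ) := by
    push_cast [Nat.cast_sub (show (j : ℕ) ≤ k - 1 by omega), Nat.cast_sub hk]
    ring
  rw [← Complex.exp_nat_mul, cyclicEigenvalues, hcast,
    show ((k : ℂ) - 1 - (j : ℕ)) * (Real.pi * Complex.I / k)
      = Real.pi * Complex.I + (-(Real.pi : ℂ) * Complex.I * (((j : ℕ) : ℂ) + 1) / (k : ℂ)) by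
      field_simp
      ring,
    Complex.exp_add, Complex.exp_pi_mul_I, neg_one_mul]

theorem aeval_cyclicEigenvalues_eq_zero_iff {k : ℕ} (hk : 0 < k) (p : ℤ[X]) :
    aeval (cyclicEigenvalues k) p = 0 ↔ evenGeomPoly k ∣ p := by
  have hμ := isPrimitiveRoot_exp_pi_mul_I_div hk
  constructor
  · refine fun hp => evenGeomPoly_dvd_of_aeval_exp_pow_eq_zero hk fun t ht0 htk => ?_
    have hj := congrFun hp ⟨k - 1 - t, by omega⟩
    rwa [aeval_pi_apply₂, cyclicEigenvalues_eq_pow hk, show k - 1 - (k - 1 - t) = t by omega]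
      at hj
  · rintro ⟨q, rfl⟩
    ext j
    have hj := j.2
    rw [aeval_pi_apply₂, map_mul, cyclicEigenvalues_eq_pow hk,
      hμ.aeval_evenGeomPoly_pow_eq_zero (by omega) (by omega) (by omega), zero_mul, Pi.zero_apply]

/-- With `ρ = -diag(e^{-πi/k},…,e^{-(k-1)πi/k})`, `Γᵢ = ρⁱ(1,…,1)ᵀ` and
`Πᵢ = (1-ρ)Γᵢ`, the lattice `Π` generated by `Π₀,…,Π_{2k-3}` is contained in
the lattice `Γ` generated by `Γ₀,…,Γ_{2k-3}`, the quotient `Γ/Π` is cyclic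
generated by the class of `Γ₀`, and `Γ₀` has order exactly `k` in `Γ/Π`;
hence `Γ/Π ≅ ℤ/kℤ`. -/
theorem stmt_8 (k : ℕ) (hk : 2 ≤ k)
    (ρ : Matrix (Fin (k-1)) (Fin (k-1)) ℂ)
    (hρ : ρ = Matrix.diagonal (fun j : Fin (k-1) =>
      -Complex.exp (-(Real.pi : ℂ) * Complex.I * (((j : ℕ) : ℂ) + 1) / (k : ℂ))))
    (Γ : ℕ → Fin (k-1) → ℂ)
    (hΓ : ∀ i, Γ i = (ρ ^ i).mulVec (fun _ => 1))
    (Pv : ℕ → Fin (k-1) → ℂ)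
    (hPv : ∀ i, Pv i = (1 - ρ).mulVec (Γ i))
    (ΓL PL : Submodule ℤ (Fin (k-1) → ℂ))
    (hΓL : ΓL = Submodule.span ℤ (Set.range fun i : Fin (2*k-2) => Γ (i : ℕ)))
    (hPL : PL = Submodule.span ℤ (Set.range fun i : Fin (2*k-2) => Pv (i : ℕ))) :
    PL ≤ ΓL ∧
    (∀ x ∈ ΓL, ∃ n : ℤ, x - n • Γ 0 ∈ PL) ∧
    (∀ n : ℤ, n • Γ 0 ∈ PL ↔ (k : ℤ) ∣ n) := by
  have hk0 : 0 < k := by omega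
  have hρ' : ρ = Matrix.diagonal (cyclicEigenvalues k) := hρ
  have hΓ' : ∀ i, Γ i = cyclicEigenvalues k ^ i := fun i => by
    ext j
    simp [hΓ, hρ', Matrix.diagonal_pow, Matrix.mulVec_diagonal]
  have hPv' : ∀ i, Pv i = (1 - cyclicEigenvalues k) * cyclicEigenvalues k ^ i := fun i => by
    rw [hPv, hΓ', hρ', ← Matrix.diagonal_one, Matrix.diagonal_sub]
    ext j
    simp [Matrix.mulVec_diagonal]
  have hS := evenGeomPoly_monic hk0
  have hker := aeval_cyclicEigenvalues_eq_zero_iff hk0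
  rw [← natDegree_evenGeomPoly hk0] at hΓL hPL
  simp only [hΓ'] at hΓL
  simp only [hPv'] at hPL
  subst hΓL hPL
  refine ⟨span_sub_mul_pow_le_span_pow _ hS ((hker _).mpr dvd_rfl), fun y hy => ?_, fun n => ?_⟩
  · obtain ⟨a, ha, b, hb, rfl⟩ := Submodule.mem_sup.mp (span_pow_le_span_sub_mul_pow_sup _ _ hy)
    obtain ⟨n, rfl⟩ := Submodule.mem_span_singleton.mp hb
    exact ⟨n, by simpa [hΓ'] using ha⟩
  · rw [hΓ' 0, pow_zero, zsmul_one_mem_span_sub_mul_pow_iff _ hS hker, eval_one_evenGeomPoly]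
end

section
/- Let k ≥ 2, ρ = −diag(e^{−πi/k},…,e^{−(k−1)πi/k}), Γᵢ = ρⁱ(1,…,1)ᵀ, Πᵢ = (1−ρ)Γᵢ. Then Γ₀ = Σ_{i=0}^{k−2} ((k−1−i)/k)·(Π_{2i} + Π_{2i+1}). -/
/-!
In the `j`-th coordinate every vector is a power of the diagonal entry `z = ρ j j`: `Γᵢ = zⁱ` and
`Π_{2i} + Π_{2i+1} = qⁱ - qⁱ⁺¹` with `q = z² = e^{-2πi(j+1)/k}`, a `k`-th root of unity other
than `1`. Abel summation turns the weighted sum into `(1/k) Σ_{i<k} (1 - qⁱ)`, and the geometric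
sum `Σ_{i<k} qⁱ` vanishes.
-/

open Finset Complex

theorem sum_range_natCast_sub_mul_pow_sub_pow_succ {R : Type*} [CommRing R] (q : R) (m : ℕ) :
    ∑ i ∈ range m, ((m : R) - i) * (q ^ i - q ^ (i + 1)) = ∑ i ∈ range (m + 1), (1 - q ^ i) := by
  induction m with
  | zero => simp
  | succ m ih =>
    have hsplit : ∀ i ∈ range (m + 1), (((m + 1 : ℕ) : R) - i) * (q ^ i - q ^ (i + 1)) =
        ((m : R) - i) * (q ^ i - q ^ (i + 1)) + (q ^ i - q ^ (i + 1)) := by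
      intros; push_cast; ring
    rw [sum_congr rfl hsplit, sum_add_distrib, sum_range_succ, ih, sum_range_sub',
      sum_range_succ _ (m + 1)]
    ring

theorem sum_range_sub_one_sub_div_mul_pow_sub_pow_succ {K : Type*} [Field K] {k : ℕ}
    (hk : (k : K) ≠ 0) {q : K} (hqk : q ^ k = 1) (hq : q ≠ 1) :
    ∑ i ∈ range (k - 1), ((k : K) - 1 - i) / k * (q ^ i - q ^ (i + 1)) = 1 := by
  obtain ⟨m, rfl⟩ : ∃ m, k = m + 1 := Nat.exists_eq_add_one.mpr <| Nat.pos_of_ne_zero <| by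
    rintro rfl; simp at hk
  have hgeom : ∑ i ∈ range (m + 1), q ^ i = 0 := by rw [geom_sum_eq hq, hqk, sub_self, zero_div]
  push_cast at hk ⊢
  simp_rw [add_sub_cancel_right, div_mul_eq_mul_div, ← sum_div,
    sum_range_natCast_sub_mul_pow_sub_pow_succ, sum_sub_distrib, hgeom]
  simp [hk]

theorem sq_neg_exp_neg_pi_mul_I (k : ℕ) (x : ℂ) :
    (-exp (-(Real.pi : ℂ) * I * x / k)) ^ 2 = exp (-(2 * Real.pi * I * x / k)) := by
  rw [neg_sq, ← exp_nat_mul]; ring_nf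

theorem exp_neg_two_pi_mul_I_mul_div_eq_inv_pow (k l : ℕ) :
    exp (-(2 * Real.pi * I * l / k)) = (exp (2 * Real.pi * I / k))⁻¹ ^ l := by
  rw [← exp_neg, ← exp_nat_mul]; ring_nf

theorem exp_neg_two_pi_mul_I_mul_div_pow_self {k : ℕ} (hk : k ≠ 0) (l : ℕ) :
    exp (-(2 * Real.pi * I * l / k)) ^ k = 1 := by
  rw [exp_neg_two_pi_mul_I_mul_div_eq_inv_pow, pow_right_comm,
    (isPrimitiveRoot_exp k hk).inv.pow_eq_one, one_pow]

theorem exp_neg_two_pi_mul_I_mul_div_ne_one {k l : ℕ} (hl0 : l ≠ 0) (hl : l < k) :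
    exp (-(2 * Real.pi * I * l / k)) ≠ 1 := by
  rw [exp_neg_two_pi_mul_I_mul_div_eq_inv_pow]
  exact (isPrimitiveRoot_exp k (by omega)).inv.pow_ne_one_of_pos_of_lt hl0 hl

theorem stmt_9_general (k : ℕ)
    (ρ : Matrix (Fin (k-1)) (Fin (k-1)) ℂ)
    (hρ : ρ = Matrix.diagonal (fun j : Fin (k-1) =>
      -Complex.exp (-(Real.pi : ℂ) * Complex.I * (((j : ℕ) : ℂ) + 1) / (k : ℂ))))
    (Γ : ℕ → Fin (k-1) → ℂ)
    (hΓ : ∀ i, Γ i = (ρ ^ i).mulVec (fun _ => 1))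
    (Pv : ℕ → Fin (k-1) → ℂ)
    (hPv : ∀ i, Pv i = (1 - ρ).mulVec (Γ i)) :
    Γ 0 = ∑ i ∈ Finset.range (k - 1),
      ((((k : ℂ) - 1 - (i : ℂ)) / (k : ℂ)) • (Pv (2 * i) + Pv (2 * i + 1))) := by
  funext j
  have hjk : (j : ℕ) + 1 < k := by omega
  set z := -exp (-(Real.pi : ℂ) * I * (((j : ℕ) : ℂ) + 1) / k)
  have hΓj : ∀ i, Γ i j = z ^ i := fun i => by
    simp [hΓ, hρ, Matrix.diagonal_pow, Matrix.mulVec_diagonal, z]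
  have hPj : ∀ i, Pv i j = (1 - z) * z ^ i := fun i => by
    rw [hPv, Matrix.sub_mulVec, Matrix.one_mulVec, Pi.sub_apply, hρ, Matrix.mulVec_diagonal, hΓj]
    ring
  have hq : z ^ 2 = exp (-(2 * Real.pi * I * ((j + 1 : ℕ) : ℂ) / k)) := by
    push_cast; exact sq_neg_exp_neg_pi_mul_I k _
  simp only [hΓj, Finset.sum_apply, Pi.smul_apply, Pi.add_apply, hPj, smul_eq_mul]
  have hk : (k : ℂ) ≠ 0 := by exact_mod_cast (by omega : k ≠ 0)
  have hqk : (z ^ 2) ^ k = 1 := hq ▸ exp_neg_two_pi_mul_I_mul_div_pow_self (by omega) _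
  have hq1 : z ^ 2 ≠ 1 := hq ▸ exp_neg_two_pi_mul_I_mul_div_ne_one (by omega) hjk
  rw [pow_zero]
  refine (sum_range_sub_one_sub_div_mul_pow_sub_pow_succ hk hqk hq1).symm.trans
    (sum_congr rfl fun i _ => ?_)
  rw [← pow_mul, ← pow_mul]
  ring

/-- The explicit identity `Γ₀ = Σ_{i=0}^{k-2} ((k-1-i)/k)(Π_{2i} + Π_{2i+1})`,
where `Γᵢ = ρⁱ(1,…,1)ᵀ`, `Πᵢ = (1-ρ)Γᵢ` and
`ρ = -diag(e^{-πi/k},…,e^{-(k-1)πi/k})`. -/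
theorem stmt_9 (k : ℕ) (hk : 2 ≤ k)
    (ρ : Matrix (Fin (k-1)) (Fin (k-1)) ℂ)
    (hρ : ρ = Matrix.diagonal (fun j : Fin (k-1) =>
      -Complex.exp (-(Real.pi : ℂ) * Complex.I * (((j : ℕ) : ℂ) + 1) / (k : ℂ))))
    (Γ : ℕ → Fin (k-1) → ℂ)
    (hΓ : ∀ i, Γ i = (ρ ^ i).mulVec (fun _ => 1))
    (Pv : ℕ → Fin (k-1) → ℂ)
    (hPv : ∀ i, Pv i = (1 - ρ).mulVec (Γ i)) :
    Γ 0 = ∑ i ∈ Finset.range (k - 1),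
      ((((k : ℂ) - 1 - (i : ℂ)) / (k : ℂ)) • (Pv (2 * i) + Pv (2 * i + 1))) :=
  stmt_9_general k ρ hρ Γ hΓ Pv hPv
end

section
/- Fix k ≥ 2 and let ρ = −diag(e^{−πi/k},…,e^{−(k−1)πi/k}) ∈ GL_{k−1}(ℂ), Γ₀ = (1,…,1)ᵀ, Γ the lattice generated by {ρⁱΓ₀ : 0 ≤ i ≤ 2k−3}, and Π = (1−ρ)Γ. Then the set of fixed points of the map induced by ρ on the quotient group ℂ^{k−1}/Γ is in bijection with Γ/(1−ρ)Γ and has exactly k elements, represented by the vectors l·(1−ρ)⁻¹Γ₀ for l = 0,1,…,k−1. -/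
/-!
Since `ρ = diagonal x` with `x j = -η ^ (j + 1)`, `η = e^{-πi/k}`, everything happens in the ring
`ℂ^{k-1}`, where `Γ` is the `ℤ`-span of `1, x, …, x ^ (2k-3)` and `(1 - ρ)⁻¹ Γ₀ = w := (1 - x)⁻¹`.

If `x z - z = ∑ cᵢ xⁱ ∈ Γ`, then `(1 - x) ∑_{t<i} xᵗ = 1 - xⁱ` shows `z + (∑ cᵢ) w ∈ Γ`, so every
fixed point is congruent to a multiple of `w`. Each `(x j)²` is a `k`-th root of unity other
than `1`, so `∑_{s<k} x^{2s} = 0` and the same telescoping gives `k w ∈ Γ`. Conversely, the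
additive functional `v ↦ 2 Re ∑ⱼ ((x j)³ - x j) v j` maps `Γ` into `2kℤ` but `w` to `2`, because
the power sums `2 Re ∑ⱼ (x j)ˢ` equal `-1 - (-1)ˢ` for `0 < s < 2k`; hence `m w ∈ Γ` forces `k ∣ m`.
-/

open Finset Matrix ComplexConjugate

section FinRepresentatives

variable {M : Type*} [AddCommGroup M] {L : Submodule ℤ M} {w z : M} {k : ℕ}

theorem exists_fin_sub_nsmul_mem (hk : 0 < k) (hkw : k • w ∈ L) {N : ℤ} (hN : z - N • w ∈ L) :
    ∃ l : Fin k, z - (l : ℕ) • w ∈ L := by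
  have hk' : (0 : ℤ) < k := by exact_mod_cast hk
  have hlt := Int.emod_lt_of_pos N hk'
  have hnonneg := Int.emod_nonneg N hk'.ne'
  refine ⟨⟨(N % k).toNat, by omega⟩, ?_⟩
  have hl : (((N % k).toNat : ℕ) : ℤ) = N - k * (N / k) := by
    rw [Int.toNat_of_nonneg hnonneg, Int.emod_def]
  have : z - ((N % k).toNat : ℕ) • w = (z - N • w) + (N / k) • (k • w) := by
    rw [← natCast_zsmul, hl]
    module
  rw [this]
  exact L.add_mem hN (L.smul_mem _ hkw)

theorem fin_eq_of_sub_nsmul_mem (hdvd : ∀ m : ℤ, m • w ∈ L → (k : ℤ) ∣ m) {l₁ l₂ : Fin k}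
    (h₁ : z - (l₁ : ℕ) • w ∈ L) (h₂ : z - (l₂ : ℕ) • w ∈ L) : l₁ = l₂ := by
  have hmem : ((l₁ : ℤ) - l₂) • w ∈ L := by
    have := L.sub_mem h₂ h₁
    rwa [show z - (l₂ : ℕ) • w - (z - (l₁ : ℕ) • w) = ((l₁ : ℤ) - l₂) • w by
      rw [sub_smul, natCast_zsmul, natCast_zsmul]; abel] at this
  have := Int.eq_zero_of_abs_lt_dvd (hdvd _ hmem) (by rw [abs_lt]; omega)
  omega

theorem existsUnique_fin_sub_nsmul_mem (hk : 0 < k) (hkw : k • w ∈ L)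
    (hdvd : ∀ m : ℤ, m • w ∈ L → (k : ℤ) ∣ m) {N : ℤ} (hN : z - N • w ∈ L) :
    ∃! l : Fin k, z - (l : ℕ) • w ∈ L :=
  let ⟨l, hl⟩ := exists_fin_sub_nsmul_mem hk hkw hN
  ⟨l, hl, fun _ h => fin_eq_of_sub_nsmul_mem hdvd h hl⟩

theorem map_mem_zmultiples_of_mem_span {A : Type*} [AddCommGroup A] (f : M →+ A) {S : Set M}
    {c : A} (hS : ∀ v ∈ S, f v ∈ AddSubgroup.zmultiples c) {v : M}
    (hv : v ∈ Submodule.span ℤ S) : f v ∈ AddSubgroup.zmultiples c :=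
  (Submodule.span_le (p := ((AddSubgroup.zmultiples c).comap f).toIntSubmodule)).mpr hS hv

end FinRepresentatives

section PowSpan

variable {R : Type*} [CommRing R]

def powSpan (x : R) (d : ℕ) : Submodule ℤ R :=
  Submodule.span ℤ (Set.range fun i : Fin d => x ^ (i : ℕ))

variable {x w : R} {d : ℕ}

theorem pow_mem_powSpan {i : ℕ} (hi : i < d) : x ^ i ∈ powSpan x d :=
  Submodule.subset_span ⟨⟨i, hi⟩, rfl⟩

theorem geom_sum_mem_powSpan {i : ℕ} (hi : i ≤ d) : ∑ t ∈ range i, x ^ t ∈ powSpan x d :=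
  Submodule.sum_mem _ fun _ ht => pow_mem_powSpan ((mem_range.mp ht).trans_le hi)

theorem mul_nsmul_sub_nsmul_mem_powSpan (hw : (1 - x) * w = 1) (hd : 0 < d) (n : ℕ) :
    x * (n • w) - n • w ∈ powSpan x d := by
  have : x * (n • w) - n • w = -(n • x ^ 0) := by
    rw [pow_zero, ← hw, mul_smul_comm, sub_mul, one_mul, smul_sub, neg_sub]
  rw [this]
  exact neg_mem (Submodule.smul_of_tower_mem _ n (pow_mem_powSpan hd))

theorem exists_sub_zsmul_mem_powSpan (hw : (1 - x) * w = 1) {z : R}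
    (hz : x * z - z ∈ powSpan x d) : ∃ N : ℤ, z - N • w ∈ powSpan x d := by
  obtain ⟨c, hc⟩ := (Submodule.mem_span_range_iff_exists_fun ℤ).mp hz
  refine ⟨-∑ i, c i, ?_⟩
  have : z - (-∑ i, c i) • w = ∑ i, c i • ∑ t ∈ range i, x ^ t := by
    refine (IsUnit.of_mul_eq_one _ hw).mul_left_cancel ?_
    calc (1 - x) * (z - (-∑ i, c i) • w) = ∑ i, c i • (1 : R) - (x * z - z) := by
          rw [mul_sub, mul_smul_comm, hw, ← sum_smul]; ring
      _ = (1 - x) * ∑ i, c i • ∑ t ∈ range i, x ^ t := by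
          rw [← hc, mul_sum]
          simp only [mul_smul_comm, mul_neg_geom_sum, smul_sub, sum_sub_distrib]
  rw [this]
  exact Submodule.sum_mem _ fun i _ => Submodule.smul_mem _ _ (geom_sum_mem_powSpan i.isLt.le)

theorem nsmul_mem_powSpan (hw : (1 - x) * w = 1) {k : ℕ}
    (hx : ∑ s ∈ range k, x ^ (2 * s) = 0) (hd : 2 * (k - 1) ≤ d) : k • w ∈ powSpan x d := by
  have : k • w = ∑ s ∈ range k, ∑ t ∈ range (2 * s), x ^ t := by
    refine (IsUnit.of_mul_eq_one _ hw).mul_left_cancel ?_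
    rw [mul_sum]
    simp only [mul_neg_geom_sum, sum_sub_distrib, hx, mul_smul_comm, hw]
    simp
  rw [this]
  exact Submodule.sum_mem _ fun s hs => geom_sum_mem_powSpan (by have := mem_range.mp hs; omega)

end PowSpan

theorem sum_pow_succ_add_inv_pow_succ {K : Type*} [Field K] {y : K} {k : ℕ} (hk : 0 < k)
    (hy : y ^ (2 * k) = 1) (hy1 : y ≠ 1) :
    ∑ j ∈ range (k - 1), (y ^ (j + 1) + y⁻¹ ^ (j + 1)) = -1 - y ^ k := by
  obtain ⟨n, rfl⟩ : ∃ n, k = n + 1 := ⟨k - 1, by omega⟩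
  have hy0 : y ≠ 0 := by rintro rfl; simp at hy
  have hinv : y * y⁻¹ = 1 := mul_inv_cancel₀ hy0
  have hyk : y⁻¹ ^ (n + 1) = y ^ (n + 1) := by
    rw [inv_pow]; exact inv_eq_of_mul_eq_one_right (by rw [← pow_add, ← two_mul, hy])
  have hG : (y - 1) * ∑ j ∈ range n, y ^ (j + 1) = y ^ (n + 1) - y := by
    simp only [pow_succ', ← mul_sum, mul_left_comm _ y, mul_geom_sum]; ring
  have hH : (y⁻¹ - 1) * ∑ j ∈ range n, y⁻¹ ^ (j + 1) = y⁻¹ ^ (n + 1) - y⁻¹ := by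
    simp only [pow_succ' y⁻¹, ← mul_sum, mul_left_comm _ y⁻¹, mul_geom_sum]; ring
  rw [Nat.add_sub_cancel, sum_add_distrib]
  refine mul_left_cancel₀ (sub_ne_zero.2 hy1) ?_
  rw [hyk] at hH
  linear_combination hG - y * hH + (∑ j ∈ range n, y⁻¹ ^ (j + 1) + 1) * hinv

def traceAddConj (ι : Type*) [Fintype ι] : (ι → ℂ) →+ ℂ where
  toFun v := ∑ j, (v j + conj (v j))
  map_zero' := by simp
  map_add' v v' := by
    rw [← sum_add_distrib]
    exact sum_congr rfl fun j _ => by simp only [Pi.add_apply, map_add]; ring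

theorem traceAddConj_apply {ι : Type*} [Fintype ι] (v : ι → ℂ) :
    traceAddConj ι v = ∑ j, (v j + conj (v j)) :=
  rfl

def negPowers (η : ℂ) (n : ℕ) : Fin n → ℂ := fun j => -η ^ ((j : ℕ) + 1)

section NegPowers

variable {η : ℂ} {k : ℕ}

theorem negPowers_sq_ne_one (hη : IsPrimitiveRoot η (2 * k)) (j : Fin (k - 1)) :
    negPowers η (k - 1) j ^ 2 ≠ 1 := by
  rw [negPowers, neg_sq, ← pow_mul, Ne, hη.pow_eq_one_iff_dvd]
  exact fun h => by have := Nat.le_of_dvd (by omega) h; omega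

theorem negPowers_ne_one (hη : IsPrimitiveRoot η (2 * k)) (j : Fin (k - 1)) :
    negPowers η (k - 1) j ≠ 1 :=
  fun h => negPowers_sq_ne_one hη j (by rw [h, one_pow])

theorem sum_negPowers_pow_two_mul_eq_zero (hη : IsPrimitiveRoot η (2 * k)) :
    ∑ s ∈ range k, negPowers η (k - 1) ^ (2 * s) = 0 := by
  funext j
  rw [Finset.sum_apply]
  set y := negPowers η (k - 1) j ^ 2
  have hyk : y ^ k = 1 := by
    simp only [y, negPowers, neg_sq, ← pow_mul]
    rw [show ((j : ℕ) + 1) * 2 * k = 2 * k * (j + 1) by ring, pow_mul, hη.pow_eq_one, one_pow]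
  have h := mul_neg_geom_sum y k
  rw [hyk, sub_self] at h
  simpa [y, pow_mul] using
    (mul_eq_zero.mp h).resolve_left (sub_ne_zero.mpr (negPowers_sq_ne_one hη j).symm)

theorem traceAddConj_negPowers_pow (hη : IsPrimitiveRoot η (2 * k)) {s : ℕ} (hs₀ : 0 < s)
    (hs : s < 2 * k) : traceAddConj (Fin (k - 1)) (negPowers η (k - 1) ^ s) = -1 - (-1) ^ s := by
  have hk : 0 < k := by omega
  have hconj : conj η = η⁻¹ := (Complex.inv_eq_conj (hη.norm'_eq_one (by omega))).symm
  have hηk : η ^ k = -1 := (hη.pow (by omega) (mul_comm 2 k)).eq_neg_one_of_two_right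
  have hy : (η ^ s) ^ (2 * k) = 1 := by rw [← pow_mul, mul_comm, pow_mul, hη.pow_eq_one, one_pow]
  have hy1 : η ^ s ≠ 1 := by
    rw [Ne, hη.pow_eq_one_iff_dvd]; exact fun h => by have := Nat.le_of_dvd hs₀ h; omega
  calc traceAddConj (Fin (k - 1)) (negPowers η (k - 1) ^ s)
      = (-1) ^ s * ∑ j ∈ range (k - 1), ((η ^ s) ^ (j + 1) + (η ^ s)⁻¹ ^ (j + 1)) := by
        rw [traceAddConj_apply, mul_sum, ← Fin.sum_univ_eq_sum_range
          (fun j => (-1) ^ s * ((η ^ s) ^ (j + 1) + (η ^ s)⁻¹ ^ (j + 1)))]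
        refine sum_congr rfl fun j _ => ?_
        simp only [Pi.pow_apply, negPowers, map_pow, map_neg, hconj, inv_pow]
        ring
    _ = (-1) ^ s * (-1 - (η ^ k) ^ s) := by
        rw [sum_pow_succ_add_inv_pow_succ hk hy hy1, ← pow_mul, ← pow_mul, mul_comm s k]
    _ = -1 - (-1) ^ s := by
        have hsq : ((-1 : ℂ) ^ s) ^ 2 = 1 := by rw [← pow_mul, pow_mul', neg_one_sq, one_pow]
        rw [hηk]
        linear_combination -hsq

theorem traceAddConj_negPowers_pow_two_mul (hη : IsPrimitiveRoot η (2 * k)) (hk : 0 < k) :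
    traceAddConj (Fin (k - 1)) (negPowers η (k - 1) ^ (2 * k)) = 2 * ((k : ℂ) - 1) := by
  have hpow : ∀ j : Fin (k - 1), negPowers η (k - 1) j ^ (2 * k) = 1 := fun j => by
    rw [negPowers, (even_two_mul k).neg_pow, ← pow_mul, mul_comm, pow_mul, hη.pow_eq_one, one_pow]
  simp only [traceAddConj_apply, Pi.pow_apply, hpow, map_one]
  rw [sum_const, card_univ, Fintype.card_fin, nsmul_eq_mul, Nat.cast_sub hk]
  ring

theorem traceAddConj_mul_negPowers_pow_mem_zmultiples (hη : IsPrimitiveRoot η (2 * k)) {i : ℕ}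
    (hi : i < 2 * k - 2) :
    traceAddConj (Fin (k - 1))
      ((negPowers η (k - 1) ^ 3 - negPowers η (k - 1)) * negPowers η (k - 1) ^ i) ∈
      AddSubgroup.zmultiples (2 * k : ℂ) := by
  set x := negPowers η (k - 1)
  rw [show (x ^ 3 - x) * x ^ i = x ^ (i + 3) - x ^ (i + 1) by ring, map_sub,
    traceAddConj_negPowers_pow hη (by omega) (by omega : i + 1 < 2 * k)]
  rcases (by omega : i + 3 < 2 * k ∨ i + 3 = 2 * k) with h | h
  · rw [traceAddConj_negPowers_pow hη (by omega) h, pow_succ _ (i + 2), pow_succ _ (i + 1)]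
    simp
  · rw [h, traceAddConj_negPowers_pow_two_mul hη (by omega), Even.neg_one_pow ⟨k - 1, by omega⟩]
    exact ⟨1, by ring⟩

theorem traceAddConj_mul_eq_two (hη : IsPrimitiveRoot η (2 * k)) (hk : 2 ≤ k)
    {w : Fin (k - 1) → ℂ} (hw : (1 - negPowers η (k - 1)) * w = 1) :
    traceAddConj (Fin (k - 1)) ((negPowers η (k - 1) ^ 3 - negPowers η (k - 1)) * w) = 2 := by
  set x := negPowers η (k - 1)
  rw [show (x ^ 3 - x) * w = -(x ^ 1 + x ^ 2) * ((1 - x) * w) by ring, hw, mul_one, map_neg,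
    map_add, traceAddConj_negPowers_pow hη (by omega) (by omega),
    traceAddConj_negPowers_pow hη (by omega) (by omega)]
  norm_num

theorem dvd_of_zsmul_mem_powSpan (hη : IsPrimitiveRoot η (2 * k)) (hk : 2 ≤ k)
    {w : Fin (k - 1) → ℂ} (hw : (1 - negPowers η (k - 1)) * w = 1) {m : ℤ}
    (hm : m • w ∈ powSpan (negPowers η (k - 1)) (2 * k - 2)) : (k : ℤ) ∣ m := by
  set x := negPowers η (k - 1)
  have h := map_mem_zmultiples_of_mem_span
    ((traceAddConj (Fin (k - 1))).comp (AddMonoidHom.mulLeft (x ^ 3 - x)))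
    (by rintro _ ⟨i, rfl⟩; exact traceAddConj_mul_negPowers_pow_mem_zmultiples hη i.isLt) hm
  rw [map_zsmul, AddMonoidHom.comp_apply, AddMonoidHom.coe_mulLeft,
    traceAddConj_mul_eq_two hη hk hw] at h
  obtain ⟨q, hq⟩ := h
  refine ⟨q, ?_⟩
  have : ((k * q : ℤ) : ℂ) = m := by
    simp only [zsmul_eq_mul] at hq; push_cast; linear_combination hq / 2
  exact_mod_cast this.symm

theorem fixedPoints_negPowers (hη : IsPrimitiveRoot η (2 * k)) (hk : 2 ≤ k)
    {w : Fin (k - 1) → ℂ} (hw : (1 - negPowers η (k - 1)) * w = 1) :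
    (∀ n : ℕ, negPowers η (k - 1) * (n • w) - n • w ∈ powSpan (negPowers η (k - 1)) (2 * k - 2)) ∧
    ∀ z, negPowers η (k - 1) * z - z ∈ powSpan (negPowers η (k - 1)) (2 * k - 2) →
      ∃! l : Fin k, z - (l : ℕ) • w ∈ powSpan (negPowers η (k - 1)) (2 * k - 2) := by
  refine ⟨mul_nsmul_sub_nsmul_mem_powSpan hw (by omega), fun z hz => ?_⟩
  obtain ⟨N, hN⟩ := exists_sub_zsmul_mem_powSpan hw hz
  exact existsUnique_fin_sub_nsmul_mem (by omega)
    (nsmul_mem_powSpan hw (sum_negPowers_pow_two_mul_eq_zero hη) (by omega))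
    (fun _ hm => dvd_of_zsmul_mem_powSpan hη hk hw hm) hN

end NegPowers

theorem isPrimitiveRoot_exp_neg_pi_mul_I_div {k : ℕ} (hk : k ≠ 0) :
    IsPrimitiveRoot (Complex.exp (-(Real.pi : ℂ) * Complex.I / k)) (2 * k) := by
  rw [show Complex.exp (-(Real.pi : ℂ) * Complex.I / k)
      = (Complex.exp (2 * Real.pi * Complex.I / (2 * k : ℕ)))⁻¹ by
    rw [← Complex.exp_neg]; congr 1; push_cast; field_simp]
  exact (Complex.isPrimitiveRoot_exp (2 * k) (by omega)).inv

theorem neg_exp_eq_negPowers (k n : ℕ) :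
    (fun j : Fin n => -Complex.exp (-(Real.pi : ℂ) * Complex.I * (((j : ℕ) : ℂ) + 1) / k)) =
      negPowers (Complex.exp (-(Real.pi : ℂ) * Complex.I / k)) n := by
  funext j
  rw [negPowers, ← Complex.exp_nat_mul]; congr 2; push_cast; ring

section Diagonal

variable {n : Type*} [Fintype n] [DecidableEq n]

theorem diagonal_mulVec_eq_mul {α : Type*} [NonUnitalNonAssocSemiring α] (d v : n → α) :
    diagonal d *ᵥ v = d * v :=
  funext (mulVec_diagonal d v)

theorem one_sub_mul_inv_one_sub {ι K : Type*} [DivisionRing K] {x : ι → K} (hx : ∀ j, x j ≠ 1) :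
    (1 - x) * (1 - x)⁻¹ = 1 :=
  funext fun j => mul_inv_cancel₀ (sub_ne_zero.2 (hx j).symm)

theorem inv_one_sub_diagonal_mulVec_one {K : Type*} [Field K] {x : n → K} (hx : ∀ j, x j ≠ 1) :
    (1 - diagonal x)⁻¹ *ᵥ (fun _ => 1) = (1 - x)⁻¹ := by
  have h1 : 1 - diagonal x = diagonal (1 - x) := by rw [← diagonal_one', diagonal_sub]; rfl
  have h2 : diagonal (1 - x) * diagonal (1 - x)⁻¹ = 1 := by
    rw [diagonal_mul_diagonal]
    exact (congrArg diagonal (one_sub_mul_inv_one_sub hx)).trans diagonal_one'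
  rw [h1, inv_eq_right_inv h2, diagonal_mulVec_eq_mul, ← Pi.one_def, mul_one]

theorem span_diagonal_pow_mulVec_one {R : Type*} [CommRing R] (x : n → R) (d : ℕ) :
    Submodule.span ℤ (Set.range fun i : Fin d => (diagonal x ^ (i : ℕ)) *ᵥ fun _ => 1) =
      powSpan x d := by
  simp [powSpan, diagonal_pow, diagonal_mulVec_eq_mul, ← Pi.one_def]

end Diagonal

/-- Fixed points of `ρ` on `ℂ^{k-1}/Γ`: every vector `l·(1-ρ)⁻¹Γ₀`
(`l = 0,…,k-1`) is a fixed point of the map induced by `ρ` on `ℂ^{k-1}/Γ`,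
and every fixed point is congruent mod `Γ` to exactly one of these `k`
vectors. -/
theorem stmt_17 (k : ℕ) (hk : 2 ≤ k)
    (ρ : Matrix (Fin (k-1)) (Fin (k-1)) ℂ)
    (hρ : ρ = Matrix.diagonal (fun j : Fin (k-1) =>
      -Complex.exp (-(Real.pi : ℂ) * Complex.I * (((j : ℕ) : ℂ) + 1) / (k : ℂ))))
    (Γ₀ : Fin (k-1) → ℂ) (hΓ₀ : Γ₀ = fun _ => 1)
    (ΓL : Submodule ℤ (Fin (k-1) → ℂ))
    (hΓL : ΓL = Submodule.span ℤ
      (Set.range fun i : Fin (2*k-2) => (ρ ^ (i : ℕ)).mulVec Γ₀)) :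
    (∀ l : Fin k,
      ρ.mulVec ((((l : ℕ) : ℂ)) • (1 - ρ)⁻¹.mulVec Γ₀) -
        (((l : ℕ) : ℂ)) • (1 - ρ)⁻¹.mulVec Γ₀ ∈ ΓL) ∧
    (∀ z : Fin (k-1) → ℂ, ρ.mulVec z - z ∈ ΓL →
      ∃! l : Fin k, z - (((l : ℕ) : ℂ)) • (1 - ρ)⁻¹.mulVec Γ₀ ∈ ΓL) := by
  have hη := isPrimitiveRoot_exp_neg_pi_mul_I_div (by omega : k ≠ 0)
  subst hΓ₀ hΓL
  rw [hρ, neg_exp_eq_negPowers, span_diagonal_pow_mulVec_one,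
    inv_one_sub_diagonal_mulVec_one (negPowers_ne_one hη)]
  simp only [diagonal_mulVec_eq_mul, Nat.cast_smul_eq_nsmul]
  obtain ⟨hfixed, hunique⟩ :=
    fixedPoints_negPowers hη hk (one_sub_mul_inv_one_sub (negPowers_ne_one hη))
  exact ⟨fun l => hfixed l, hunique⟩
end
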